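/- Let A, B, Ã be n×n real symmetric matrices with λ_min(A) = 0, λ₂(A) > 0, and B positive semidefinite. Let x₀ satisfy A x₀ = 0 and B x₀ ≠ 0. Suppose the function f(x) = (xᵀ(A+Ã)x)/(xᵀBx), defined on {x : xᵀBx > 0}, attains its minimum at a point x₊. Then sin²∠(x₊, x₀) ≤ (‖Ã‖/λ₂(A)) · (1 + (‖x₀‖²/(x₀ᵀBx₀)) · (x₊ᵀBx₊/‖x₊‖²)). -/

import Mathlib

noncomputable section
open Matrix

/-- Spectral (operator 2-) norm of a real matrix. -/
noncomputable def specNorm {m n : ℕ} (M : Matrix (Fin m) (Fin n) ℝ) : ℝ :=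
  ‖LinearMap.toContinuousLinearMap (Matrix.toEuclideanLin M)‖

/-- Eigenvalues of a Hermitian matrix, sorted in ascending order. -/
noncomputable def sortedEig {n : ℕ} {M : Matrix (Fin n) (Fin n) ℝ} (hM : M.IsHermitian) :
    Fin n → ℝ :=
  hM.eigenvalues ∘ Tuple.sort hM.eigenvalues

/-! Expand in an orthonormal eigenbasis of `A`. Every eigenvalue other than the smallest is at
least `λ₂(A) > 0`, so the kernel vector `x₀` is a multiple of the bottom eigenvector and, for every
`v`, `λ₂(A) (‖v‖² - (v·x₀)²/‖x₀‖²) ≤ vᵀAv`. On the other hand, comparing the quotient at the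
minimiser `x₊` with its value at `x₀`, where `A` contributes nothing, and bounding both `Ã`-terms by
`‖Ã‖` gives `x₊ᵀAx₊ ≤ ‖Ã‖ (‖x₊‖² + ‖x₀‖² x₊ᵀBx₊ / x₀ᵀBx₀)`. Dividing the resulting chain by
`λ₂(A) ‖x₊‖²` is the claim. -/

theorem Tuple.apply_sort_one_le_of_ne {α : Type*} [LinearOrder α] {n : ℕ} (f : Fin n → α)
    (h : 1 < n) {i : Fin n} (hi : i ≠ Tuple.sort f ⟨0, by omega⟩) :
    f (Tuple.sort f ⟨1, h⟩) ≤ f i := by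
  have hi' : (Tuple.sort f).symm i ≠ ⟨0, by omega⟩ := fun h0 => hi (by rw [← h0]; simp)
  have hle : (⟨1, h⟩ : Fin n) ≤ (Tuple.sort f).symm i := by
    rw [Fin.le_def]
    have := Fin.val_ne_of_ne hi'
    simp only at this ⊢
    omega
  simpa using Tuple.monotone_sort f hle

theorem Matrix.PosSemidef.dotProduct_mulVec_pos {ι : Type*} [Fintype ι] {B : Matrix ι ι ℝ}
    (hB : B.PosSemidef) {x : ι → ℝ} (hx : B *ᵥ x ≠ 0) : 0 < x ⬝ᵥ B *ᵥ x := by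
  have hnonneg : 0 ≤ x ⬝ᵥ B *ᵥ x := by simpa using hB.dotProduct_mulVec_nonneg x
  have hne : x ⬝ᵥ B *ᵥ x ≠ 0 := by simpa using mt (hB.dotProduct_mulVec_zero_iff x).1 hx
  exact hnonneg.lt_of_ne' hne

theorem abs_dotProduct_mulVec_le_specNorm {n : ℕ} (M : Matrix (Fin n) (Fin n) ℝ)
    (x : Fin n → ℝ) : |x ⬝ᵥ M *ᵥ x| ≤ specNorm M * (x ⬝ᵥ x) := by
  set T := LinearMap.toContinuousLinearMap (Matrix.toEuclideanLin M)
  set y : EuclideanSpace ℝ (Fin n) := WithLp.toLp 2 x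
  have hquad : x ⬝ᵥ M *ᵥ x = inner ℝ y (T y) := by
    rw [EuclideanSpace.inner_eq_star_dotProduct]; simp [T, y, dotProduct_comm]
  have hnorm : x ⬝ᵥ x = ‖y‖ ^ 2 := by
    rw [← real_inner_self_eq_norm_sq, EuclideanSpace.inner_eq_star_dotProduct]; simp [y]
  rw [hquad, hnorm, specNorm]
  calc |inner ℝ y (T y)| ≤ ‖y‖ * ‖T y‖ := abs_real_inner_le_norm _ _
    _ ≤ ‖y‖ * (‖T‖ * ‖y‖) := by gcongr; exact T.le_opNorm y
    _ = ‖T‖ * ‖y‖ ^ 2 := by ring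

namespace Matrix.IsHermitian

variable {ι : Type*} [Fintype ι] [DecidableEq ι] {A : Matrix ι ι ℝ} (hA : A.IsHermitian)

theorem dotProduct_eq_sum_eigenvectorBasis (x y : ι → ℝ) :
    x ⬝ᵥ y = ∑ i, (⇑(hA.eigenvectorBasis i) ⬝ᵥ x) * (⇑(hA.eigenvectorBasis i) ⬝ᵥ y) := by
  have := hA.eigenvectorBasis.sum_inner_mul_inner (WithLp.toLp 2 x) (WithLp.toLp 2 y)
  simp only [EuclideanSpace.inner_eq_star_dotProduct, star_trivial] at this
  simpa [dotProduct_comm] using this.symm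

theorem eigenvalues_mul_dotProduct_eigenvectorBasis (i : ι) (x : ι → ℝ) :
    hA.eigenvalues i * (⇑(hA.eigenvectorBasis i) ⬝ᵥ x) = ⇑(hA.eigenvectorBasis i) ⬝ᵥ A *ᵥ x := by
  have hsymm : Aᵀ = A := by simpa using hA.eq
  rw [dotProduct_mulVec, ← mulVec_transpose, hsymm, hA.mulVec_eigenvectorBasis, smul_dotProduct,
    smul_eq_mul]

theorem dotProduct_mulVec_eq_sum_eigenvalues (x y : ι → ℝ) :
    x ⬝ᵥ A *ᵥ y = ∑ i, hA.eigenvalues i *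
      ((⇑(hA.eigenvectorBasis i) ⬝ᵥ x) * (⇑(hA.eigenvectorBasis i) ⬝ᵥ y)) := by
  simp_rw [hA.dotProduct_eq_sum_eigenvectorBasis x,
    ← hA.eigenvalues_mul_dotProduct_eigenvectorBasis]
  exact Finset.sum_congr rfl fun i _ => by ring

theorem mul_sub_le_dotProduct_mulVec {L : ℝ} (hL : 0 < L) {j₀ : ι}
    (hgap : ∀ i ≠ j₀, L ≤ hA.eigenvalues i) {x₀ : ι → ℝ} (hx₀ : x₀ ≠ 0) (hAx₀ : A *ᵥ x₀ = 0)
    (v : ι → ℝ) : L * (v ⬝ᵥ v - (v ⬝ᵥ x₀) ^ 2 / (x₀ ⬝ᵥ x₀)) ≤ v ⬝ᵥ A *ᵥ v := by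
  set c : ι → ℝ := fun i => ⇑(hA.eigenvectorBasis i) ⬝ᵥ v
  set d : ι → ℝ := fun i => ⇑(hA.eigenvectorBasis i) ⬝ᵥ x₀
  have heigd (i : ι) : hA.eigenvalues i * d i = 0 := by
    simp [d, hA.eigenvalues_mul_dotProduct_eigenvectorBasis, hAx₀]
  have hd (i : ι) (hi : i ≠ j₀) : d i = 0 :=
    (mul_eq_zero.1 (heigd i)).resolve_left (hL.trans_le (hgap i hi)).ne'
  have hsingle (f : ι → ℝ) : ∑ i, f i * d i = f j₀ * d j₀ :=
    Finset.sum_eq_single j₀ (fun i _ hi => by rw [hd i hi, mul_zero]) (by simp)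
  have hx₀x₀ : x₀ ⬝ᵥ x₀ = d j₀ * d j₀ := by rw [hA.dotProduct_eq_sum_eigenvectorBasis, hsingle]
  have hdj : d j₀ ≠ 0 := fun h => hx₀ (dotProduct_self_eq_zero.1 (by rw [hx₀x₀, h, mul_zero]))
  have heig : hA.eigenvalues j₀ = 0 := (mul_eq_zero.1 (heigd j₀)).resolve_right hdj
  have hproj : (v ⬝ᵥ x₀) ^ 2 / (x₀ ⬝ᵥ x₀) = c j₀ ^ 2 := by
    rw [hA.dotProduct_eq_sum_eigenvectorBasis v x₀, hsingle, hx₀x₀]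
    field_simp
    rfl
  rw [hproj, hA.dotProduct_eq_sum_eigenvectorBasis v v, hA.dotProduct_mulVec_eq_sum_eigenvalues,
    ← Finset.add_sum_erase _ _ (Finset.mem_univ j₀)]
  calc L * (c j₀ * c j₀ + ∑ i ∈ Finset.univ.erase j₀, c i * c i - c j₀ ^ 2)
      = ∑ i ∈ Finset.univ.erase j₀, L * (c i * c i) := by rw [← Finset.mul_sum]; ring
    _ ≤ ∑ i ∈ Finset.univ.erase j₀, hA.eigenvalues i * (c i * c i) :=
        Finset.sum_le_sum fun i hi =>
          mul_le_mul_of_nonneg_right (hgap i (Finset.ne_of_mem_erase hi)) (mul_self_nonneg _)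
    _ = ∑ i, hA.eigenvalues i * (c i * c i) := Finset.sum_erase _ (by simp [heig])

end Matrix.IsHermitian

theorem dotProduct_mulVec_le_of_div_le {n : ℕ} {A At B : Matrix (Fin n) (Fin n) ℝ}
    {x₀ x : Fin n → ℝ} (hAx₀ : A *ᵥ x₀ = 0) (hx₀ : 0 < x₀ ⬝ᵥ B *ᵥ x₀) (hx : 0 < x ⬝ᵥ B *ᵥ x)
    (hle : x ⬝ᵥ (A + At) *ᵥ x / (x ⬝ᵥ B *ᵥ x) ≤ x₀ ⬝ᵥ (A + At) *ᵥ x₀ / (x₀ ⬝ᵥ B *ᵥ x₀)) :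
    x ⬝ᵥ A *ᵥ x ≤ specNorm At * (x ⬝ᵥ x + (x₀ ⬝ᵥ x₀) / (x₀ ⬝ᵥ B *ᵥ x₀) * (x ⬝ᵥ B *ᵥ x)) := by
  rw [add_mulVec, add_mulVec, hAx₀, zero_add, dotProduct_add, div_le_div_iff₀ hx hx₀] at hle
  have hx₀At := (le_abs_self _).trans (abs_dotProduct_mulVec_le_specNorm At x₀)
  have hxAt := (neg_le_abs _).trans (abs_dotProduct_mulVec_le_specNorm At x)
  have hcleared : x ⬝ᵥ A *ᵥ x * (x₀ ⬝ᵥ B *ᵥ x₀) ≤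
      specNorm At * (x ⬝ᵥ x) * (x₀ ⬝ᵥ B *ᵥ x₀) + specNorm At * (x₀ ⬝ᵥ x₀) * (x ⬝ᵥ B *ᵥ x) := by
    linarith [mul_le_mul_of_nonneg_right hx₀At hx.le, mul_le_mul_of_nonneg_right hxAt hx₀.le]
  rw [← mul_le_mul_iff_of_pos_right hx₀]
  calc _ ≤ _ := hcleared
    _ = _ := by field_simp

/-- Perturbation bound for the minimum-eigenvalue eigenvector: if λ_min(A)=0, λ₂(A)>0,
B ⪰ 0, A x₀ = 0, B x₀ ≠ 0, and xm minimizes f(x) = xᵀ(A+Ã)x / xᵀBx over {x : xᵀBx > 0},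
then sin²∠(xm,x₀) ≤ (‖Ã‖/λ₂(A)) (1 + (‖x₀‖²/x₀ᵀBx₀)(xmᵀBxm/‖xm‖²)). -/
theorem eigenvector_perturbation_univariate {n : ℕ} (hn : 2 ≤ n)
    (A B At : Matrix (Fin n) (Fin n) ℝ)
    (hA : A.IsHermitian) (hB : B.PosSemidef)
    (hpos : 0 < sortedEig hA ⟨1, by omega⟩)
    (x₀ : Fin n → ℝ) (hx₀A : A.mulVec x₀ = 0) (hx₀B : B.mulVec x₀ ≠ 0)
    (xm : Fin n → ℝ) (hxm : 0 < xm ⬝ᵥ B.mulVec xm)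
    (hminim : ∀ x : Fin n → ℝ, 0 < x ⬝ᵥ B.mulVec x →
      (xm ⬝ᵥ (A + At).mulVec xm) / (xm ⬝ᵥ B.mulVec xm) ≤
        (x ⬝ᵥ (A + At).mulVec x) / (x ⬝ᵥ B.mulVec x)) :
    1 - (xm ⬝ᵥ x₀) ^ 2 / ((xm ⬝ᵥ xm) * (x₀ ⬝ᵥ x₀)) ≤
      (specNorm At / sortedEig hA ⟨1, by omega⟩) *
        (1 + ((x₀ ⬝ᵥ x₀) / (x₀ ⬝ᵥ B.mulVec x₀)) * ((xm ⬝ᵥ B.mulVec xm) / (xm ⬝ᵥ xm))) := by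
  have hx₀ : x₀ ≠ 0 := by rintro rfl; exact hx₀B (mulVec_zero B)
  have hxm₀ : xm ≠ 0 := by rintro rfl; simp at hxm
  have hx₀B' : 0 < x₀ ⬝ᵥ B *ᵥ x₀ := hB.dotProduct_mulVec_pos hx₀B
  have hq : 0 < x₀ ⬝ᵥ x₀ := by simpa using dotProduct_self_star_pos_iff.2 hx₀
  have hp : 0 < xm ⬝ᵥ xm := by simpa using dotProduct_self_star_pos_iff.2 hxm₀
  have hlower := hA.mul_sub_le_dotProduct_mulVec hpos
    (fun i hi => Tuple.apply_sort_one_le_of_ne hA.eigenvalues hn hi) hx₀ hx₀A xm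
  have hupper := dotProduct_mulVec_le_of_div_le hx₀A hx₀B' hxm (hminim x₀ hx₀B')
  rw [div_mul_eq_mul_div, le_div_iff₀ hpos]
  calc (1 - (xm ⬝ᵥ x₀) ^ 2 / ((xm ⬝ᵥ xm) * (x₀ ⬝ᵥ x₀))) * sortedEig hA ⟨1, by omega⟩
      = sortedEig hA ⟨1, by omega⟩ * (xm ⬝ᵥ xm - (xm ⬝ᵥ x₀) ^ 2 / (x₀ ⬝ᵥ x₀)) / (xm ⬝ᵥ xm) := by
        field_simp
    _ ≤ specNorm At * (xm ⬝ᵥ xm + (x₀ ⬝ᵥ x₀) / (x₀ ⬝ᵥ B *ᵥ x₀) * (xm ⬝ᵥ B *ᵥ xm)) / (xm ⬝ᵥ xm) :=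
        div_le_div_of_nonneg_right (hlower.trans hupper) hp.le
    _ = _ := by field_simp
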